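/- Let Γ_S > 0 and Γ_D > 0. There exists a power allocation ratio a ∈ [0,1] with positive instantaneous secrecy rate C(a) > 0 if and only if Γ_D > 1 + 1/Γ_S. -/

import Mathlib

/-- SINR at the untrusted UAV with power allocation ratio `a`. -/
noncomputable def sinrU (S a : ℝ) : ℝ := a * S / ((1 - a) * S + 1)

/-- SINR at the destination with power allocation ratio `a`. -/
noncomputable def sinrD (S D a : ℝ) : ℝ := a * S * D / (S + D + 1)

/-- Instantaneous secrecy rate. -/
noncomputable def secrecyRate (S D a : ℝ) : ℝ :=
  max 0 (Real.log (1 + sinrD S D a) - Real.log (1 + sinrU S a))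

/-! The secrecy rate is positive exactly when `Γ̃_U(a) < Γ̃_D(a)`, and clearing denominators,
`Γ̃_D(a) - Γ̃_U(a)` has the sign of `a · ((1 - a) Γ_S Γ_D - (Γ_S + 1))`. So a good `a` exists iff
`Γ_S + 1 < (1 - a) Γ_S Γ_D` for some `a ∈ (0, 1]`, i.e. iff `Γ_S + 1 < Γ_S Γ_D`. -/

section

variable {S D a : ℝ}

lemma sinrU_nonneg (hS : 0 ≤ S) (ha₀ : 0 ≤ a) (ha₁ : a ≤ 1) : 0 ≤ sinrU S a := by
  unfold sinrU
  have : 0 ≤ 1 - a := sub_nonneg.mpr ha₁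
  positivity

lemma sinrD_nonneg (hS : 0 ≤ S) (hD : 0 ≤ D) (ha₀ : 0 ≤ a) : 0 ≤ sinrD S D a := by
  unfold sinrD
  positivity

lemma secrecyRate_pos_iff (hU : 0 ≤ sinrU S a) (hD : 0 ≤ sinrD S D a) :
    0 < secrecyRate S D a ↔ sinrU S a < sinrD S D a := by
  rw [secrecyRate, lt_max_iff, sub_pos, Real.log_lt_log_iff (by linarith) (by linarith)]
  simp only [lt_irrefl, false_or, add_lt_add_iff_left]

lemma sinrD_sub_sinrU (hS : 0 ≤ S) (hD : 0 ≤ D) (ha₁ : a ≤ 1) :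
    sinrD S D a - sinrU S a =
      a * S * ((1 - a) * S * D - (S + 1)) / (((1 - a) * S + 1) * (S + D + 1)) := by
  have : 0 ≤ 1 - a := sub_nonneg.mpr ha₁
  unfold sinrD sinrU
  field_simp
  ring

lemma sinrU_lt_sinrD_iff (hS : 0 < S) (hD : 0 ≤ D) (ha₀ : 0 ≤ a) (ha₁ : a ≤ 1) :
    sinrU S a < sinrD S D a ↔ 0 < a ∧ S + 1 < (1 - a) * S * D := by
  have : 0 ≤ 1 - a := sub_nonneg.mpr ha₁
  rw [← sub_pos, sinrD_sub_sinrU hS.le hD ha₁, div_pos_iff_of_pos_right (by positivity),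
    ← sub_pos (b := S + 1)]
  constructor
  · intro h
    have ha : 0 < a := ha₀.lt_of_ne (by rintro rfl; simp at h)
    exact ⟨ha, (pos_iff_pos_of_mul_pos h).mp (mul_pos ha hS)⟩
  · rintro ⟨ha, hgap⟩
    exact mul_pos (mul_pos ha hS) hgap

end

theorem stmt_6 (S D : ℝ) (hS : 0 < S) (hD : 0 < D) :
    (∃ a ∈ Set.Icc (0 : ℝ) 1, 0 < secrecyRate S D a) ↔ 1 + 1 / S < D := by
  have hthreshold : 1 + 1 / S < D ↔ S + 1 < S * D := by
    rw [← div_lt_iff₀' hS, add_div, div_self hS.ne']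
  have hpos_iff : ∀ a ∈ Set.Icc (0 : ℝ) 1,
      0 < secrecyRate S D a ↔ 0 < a ∧ S + 1 < (1 - a) * S * D := fun a ⟨ha₀, ha₁⟩ => by
    rw [secrecyRate_pos_iff (sinrU_nonneg hS.le ha₀ ha₁) (sinrD_nonneg hS.le hD.le ha₀),
      sinrU_lt_sinrD_iff hS hD.le ha₀ ha₁]
  rw [hthreshold]
  constructor
  · rintro ⟨a, ha, hrate⟩
    obtain ⟨ha₀, hgap⟩ := (hpos_iff a ha).mp hrate
    have := mul_pos ha₀ (mul_pos hS hD)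
    linarith
  · intro h
    -- halfway between `0` and the largest admissible ratio `1 - (S + 1) / (S * D)`
    set a := (S * D - (S + 1)) / (2 * (S * D))
    have hSD : 0 < S * D := mul_pos hS hD
    have ha₀ : 0 < a := div_pos (by linarith) (by positivity)
    have ha₁ : a ≤ 1 := (div_le_one (by positivity)).mpr (by linarith)
    have hgap : (1 - a) * S * D = (S * D + (S + 1)) / 2 := by
      simp only [a]
      field_simp
      ring
    exact ⟨a, ⟨ha₀.le, ha₁⟩, (hpos_iff a ⟨ha₀.le, ha₁⟩).mpr ⟨ha₀, by linarith⟩⟩
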